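/- For a prime p ≥ 13, the metric group (Z/pZ, d_Lee), where d_Lee(a,b) = l_Lee(a−b), cannot be isometrically embedded into any metric ultraproduct of finite symmetric groups with Hamming metrics; equivalently, it is not d_H-approximable: there exists δ > 0 such that for every n and every map γ : Z/pZ → S_n satisfying d_H(γ(g)γ(h), γ(g+h)) < δ for all g,h, there exist g,h with |d_Lee(g,h) − d_H(γ(g),γ(h))| ≥ δ. -/

import Mathlib

/-- The Lee norm on `ZMod p`. -/
noncomputable def lLee (p : ℕ) (a : ZMod p) : ℝ :=
  2 * ((min a.val (p - a.val) : ℕ) : ℝ) / ((p : ℝ) - 1)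

/-- The Lee metric on `ZMod p`. -/
noncomputable def dLee (p : ℕ) (a b : ZMod p) : ℝ := lLee p (a - b)

/-- The normalized Hamming distance on the symmetric group on `n` points. -/
noncomputable def dHam (n : ℕ) (g h : Equiv.Perm (Fin n)) : ℝ :=
  1 - ((Finset.univ.filter fun i => (g⁻¹ * h) i = i).card : ℝ) / n

open Finset Equiv

private lemma fixCard_le (n : ℕ) (g : Perm (Fin n)) :
    (univ.filter fun i => g i = i).card ≤ n := by
  simpa using Finset.card_filter_le (univ : Finset (Fin n)) (fun i => g i = i)

private lemma fixCard_inv (n : ℕ) (g : Perm (Fin n)) :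
    (univ.filter fun i => g⁻¹ i = i).card = (univ.filter fun i => g i = i).card := by
  congr 1
  ext i
  simp only [mem_filter, mem_univ, true_and]
  rw [Perm.inv_eq_iff_eq, eq_comm]

private lemma fixCard_conj (n : ℕ) (g k : Perm (Fin n)) :
    (univ.filter fun i => (k⁻¹ * g * k) i = i).card = (univ.filter fun i => g i = i).card := by
  apply Finset.card_bij (fun i _ => k i)
  · intro a ha
    simp only [mem_filter, mem_univ, true_and] at ha ⊢
    simp only [Perm.mul_apply] at ha ⊢
    rw [Perm.inv_eq_iff_eq, eq_comm] at ha
    exact ha.symm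
  · intro a _ b _ hab
    exact k.injective hab
  · intro b hb
    refine ⟨k⁻¹ b, ?_, by simp⟩
    simp only [mem_filter, mem_univ, true_and] at hb ⊢
    simp only [Perm.mul_apply] at hb ⊢
    simp [hb]

private lemma fixCard_subadd (n : ℕ) (a b : Perm (Fin n)) :
    (univ.filter fun i => a i = i).card + (univ.filter fun i => b i = i).card ≤
      n + (univ.filter fun i => (a * b) i = i).card := by
  have hsub : (univ.filter fun i => a i = i) ∩ (univ.filter fun i => b i = i) ⊆
      (univ.filter fun i => (a * b) i = i) := by
    intro i hi
    simp only [mem_inter, mem_filter, mem_univ, true_and] at hi ⊢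
    simp only [Perm.mul_apply] at hi ⊢
    rw [hi.2, hi.1]
  calc _ = ((univ.filter fun i => a i = i) ∪ (univ.filter fun i => b i = i)).card
        + ((univ.filter fun i => a i = i) ∩ (univ.filter fun i => b i = i)).card := by
        rw [Finset.card_union_add_card_inter]
    _ ≤ n + _ :=
        add_le_add ((Finset.card_le_univ _).trans (by simp)) (card_le_card hsub)

private lemma dHam_symm (n : ℕ) (g h : Perm (Fin n)) : dHam n g h = dHam n h g := by
  unfold dHam
  have : (h⁻¹ * g) = (g⁻¹ * h)⁻¹ := by group
  rw [this, fixCard_inv]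

private lemma dHam_right_inv (n : ℕ) (g h k : Perm (Fin n)) :
    dHam n (g * k) (h * k) = dHam n g h := by
  unfold dHam
  have : ((g * k)⁻¹ * (h * k)) = k⁻¹ * (g⁻¹ * h) * k := by group
  rw [this, fixCard_conj]

private lemma dHam_triangle (n : ℕ) (hn : 0 < n) (g h k : Perm (Fin n)) :
    dHam n g k ≤ dHam n g h + dHam n h k := by
  unfold dHam
  have key := fixCard_subadd n (g⁻¹ * h) (h⁻¹ * k)
  have hmul : (g⁻¹ * h) * (h⁻¹ * k) = g⁻¹ * k := by group
  rw [hmul] at key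
  have hn' : (0:ℝ) < n := by exact_mod_cast hn
  have hc : ((univ.filter fun i => (g⁻¹ * h) i = i).card : ℝ)
      + ((univ.filter fun i => (h⁻¹ * k) i = i).card : ℝ)
      ≤ n + ((univ.filter fun i => (g⁻¹ * k) i = i).card : ℝ) := by exact_mod_cast key
  have hd := (div_le_div_iff_of_pos_right hn').mpr hc
  rw [add_div, add_div, div_self hn'.ne'] at hd
  linarith

private lemma dHam_pow_le (n : ℕ) (g : Perm (Fin n)) (k : ℕ) :
    dHam n (g ^ k) 1 ≤ dHam n g 1 := by
  have hcard : (univ.filter fun i => (g⁻¹ * 1) i = i).card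
      ≤ (univ.filter fun i => ((g ^ k)⁻¹ * 1) i = i).card := by
    apply card_le_card
    intro i hi
    simp only [mem_filter, mem_univ, true_and, mul_one] at hi ⊢
    rw [Perm.inv_eq_iff_eq, eq_comm] at hi ⊢
    induction k with
    | zero => simp
    | succ m ih => rw [pow_succ, Perm.mul_apply, hi, ih]
  unfold dHam
  rcases Nat.eq_zero_or_pos n with hn | hn
  · subst hn; simp
  have hn' : (0:ℝ) < n := by exact_mod_cast hn
  have hc : ((univ.filter fun i => (g⁻¹ * 1) i = i).card : ℝ)
      ≤ ((univ.filter fun i => ((g ^ k)⁻¹ * 1) i = i).card : ℝ) := by exact_mod_cast hcard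
  have := (div_le_div_iff_of_pos_right hn').mpr hc
  linarith

/-- For a prime `p ≥ 13`, the metric group `(ZMod p, d_Lee)` is not
`d_H`-approximable by finite symmetric groups with Hamming metrics. -/
theorem lee_group_not_sofic_metric (p : ℕ) (hp : p.Prime) (hp13 : 13 ≤ p) :
    ∃ δ > (0 : ℝ), ∀ (n : ℕ) (γ : ZMod p → Equiv.Perm (Fin n)),
      (∀ g h : ZMod p, dHam n (γ g * γ h) (γ (g + h)) < δ) →
      ∃ g h : ZMod p, δ ≤ |dLee p g h - dHam n (γ g) (γ h)| := by
  have hppos : 0 < p := by omega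
  haveI : NeZero p := ⟨by omega⟩
  haveI : Fact (1 < p) := ⟨by omega⟩
  obtain ⟨m, hm⟩ : ∃ m, p = 2 * m + 1 := (hp.odd_of_ne_two (by omega))
  have hm6 : 6 ≤ m := by omega
  have hpR : (p : ℝ) = 2 * (m : ℝ) + 1 := by exact_mod_cast congrArg (Nat.cast (R := ℝ)) hm
  have hmR : (6 : ℝ) ≤ (m : ℝ) := by exact_mod_cast hm6
  refine ⟨1 / (2 * (p : ℝ)), by positivity, ?_⟩
  intro n γ H
  by_contra hcon
  push_neg at hcon
  set δ : ℝ := 1 / (2 * (p : ℝ)) with hδdef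
  have hpRpos : (0:ℝ) < p := by positivity
  have hδpos : 0 < δ := by positivity
  have hδ26 : δ ≤ 1 / 26 := by
    rw [hδdef, div_le_div_iff₀ (by positivity) (by norm_num)]
    have : (13:ℝ) ≤ (p:ℝ) := by exact_mod_cast hp13
    linarith
  -- n must be positive
  have hn : 0 < n := by
    rcases Nat.eq_zero_or_pos n with rfl | hn
    · exfalso
      have h := H 0 0
      have he : dHam 0 (γ 0 * γ 0) (γ (0 + 0)) = 1 := by simp [dHam]
      rw [he] at h
      linarith
    · exact hn
  -- γ 0 is δ-close to the identity
  have hγ0 : dHam n (γ 0) 1 < δ := by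
    have h00 := H 0 0
    rw [add_zero] at h00
    have e : dHam n (γ 0 * γ 0) (1 * γ 0) = dHam n (γ 0) 1 := dHam_right_inv n _ _ _
    rw [one_mul] at e
    rw [← e]
    exact h00
  -- by induction, γ(k) is close to (γ 1)^k
  have hind : ∀ k : ℕ, dHam n (γ (k : ZMod p)) (γ 1 ^ k) ≤ ((k : ℝ) + 1) * δ := by
    intro k
    induction k with
    | zero => simpa using hγ0.le
    | succ k ih =>
      have h1 := H (k : ZMod p) 1
      have hcast : ((k + 1 : ℕ) : ZMod p) = (k : ZMod p) + 1 := by push_cast; ring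
      have t1 : dHam n (γ ((k + 1 : ℕ) : ZMod p)) (γ (k : ZMod p) * γ 1) < δ := by
        rw [hcast, dHam_symm]
        exact h1
      have t2 : dHam n (γ (k : ZMod p) * γ 1) (γ 1 ^ (k + 1))
          = dHam n (γ (k : ZMod p)) (γ 1 ^ k) := by
        rw [pow_succ]
        exact dHam_right_inv n _ _ _
      have t3 := dHam_triangle n hn (γ ((k + 1 : ℕ) : ZMod p)) (γ (k : ZMod p) * γ 1)
        (γ 1 ^ (k + 1))
      rw [t2] at t3
      rw [hcast] at t1 t3
      rw [hcast]
      push_cast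
      linarith
  -- the Lee distance values
  have hval_m : ((m : ZMod p)).val = m := ZMod.val_cast_of_lt (by omega)
  have hdm : dLee p ((m : ZMod p)) 0 = 1 := by
    unfold dLee lLee
    rw [sub_zero, hval_m, min_eq_left (by omega : m ≤ p - m), hpR]
    have hm0 : (m:ℝ) ≠ 0 := by linarith
    field_simp
    ring
  have hd1 : dLee p 1 0 = 2 / ((p : ℝ) - 1) := by
    unfold dLee lLee
    rw [sub_zero, ZMod.val_one, min_eq_left (by omega : 1 ≤ p - 1)]
    norm_num
  -- consequences of the negated conclusion
  have hv1 := hcon ((m : ZMod p)) 0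
  rw [hdm] at hv1
  have hv1' : 1 - δ < dHam n (γ ((m : ZMod p))) (γ 0) := by
    have := (abs_lt.mp hv1).2
    linarith
  have hv2 := hcon 1 0
  rw [hd1] at hv2
  have hv2' : dHam n (γ 1) (γ 0) < 2 / ((p : ℝ) - 1) + δ := by
    have := (abs_lt.mp hv2).1
    linarith
  -- assemble the chain of inequalities
  have c1 := dHam_triangle n hn (γ ((m : ZMod p))) (γ 1 ^ m) (γ 0)
  have c2 := dHam_triangle n hn (γ 1 ^ m) 1 (γ 0)
  have c3 := hind m
  have c4 := dHam_pow_le n (γ 1) m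
  have c5 := dHam_triangle n hn (γ 1) (γ 0) 1
  have c6 : dHam n 1 (γ 0) = dHam n (γ 0) 1 := dHam_symm n _ _
  have c7 : dHam n (γ 0) (γ 1) = dHam n (γ 1) (γ 0) := dHam_symm n _ _
  -- numeric bounds
  have hden : (p : ℝ) - 1 = 2 * (m : ℝ) := by rw [hpR]; ring
  have hb1 : 2 / ((p : ℝ) - 1) ≤ 1 / 6 := by
    rw [hden, div_le_div_iff₀ (by linarith) (by norm_num)]
    linarith
  have hb3 : ((m : ℝ) + 1) * δ ≤ 1 / 3 := by
    rw [hδdef, hpR, mul_one_div, div_le_div_iff₀ (by linarith) (by norm_num)]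
    linarith
  linarith
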